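/- Let M : [-1,0] → ℝ^{n×n} be of bounded variation, A = M(0) − M(0⁻), and suppose det(I − A) ≠ 0. Define N(θ) = (I − A)^{-1} M(θ) for θ ∈ [-1,0) and N(0) = (I − A)^{-1} M(0⁻). Then a continuous function x : [-1,δ) → ℝ^n satisfies x(t) = ∫_{-1}^0 dM(θ) x(t+θ) for all t ∈ [0,δ) if and only if it satisfies x(t) = ∫_{-1}^0 dN(θ) x(t+θ) for all t ∈ [0,δ); moreover N satisfies lim_{s→0⁻} Var N on [s,0] = 0. -/

import Mathlib

open scoped ENNReal

/-- Riemann–Stieltjes integral predicate: `∫_a^b dM(θ) f(θ) = v`. -/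
def IsRSIntegral {n : ℕ} (M : ℝ → Matrix (Fin n) (Fin n) ℝ) (f : ℝ → Fin n → ℝ)
    (a b : ℝ) (v : Fin n → ℝ) : Prop :=
  ∀ ε > (0:ℝ), ∃ δ > (0:ℝ), ∀ (k : ℕ) (t ξ : ℕ → ℝ),
    t 0 = a → t k = b →
    (∀ i < k, t i ≤ t (i + 1) ∧ t (i + 1) - t i ≤ δ ∧ ξ i ∈ Set.Icc (t i) (t (i + 1))) →
    dist (∑ i ∈ Finset.range k, (M (t (i + 1)) - M (t i)).mulVec (f (ξ i))) v ≤ ε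

/-- Total variation of a matrix-valued function on `[a,b]` (entrywise `ℓ¹` norm). -/
noncomputable def MatVarOn {n : ℕ} (M : ℝ → Matrix (Fin n) (Fin n) ℝ) (a b : ℝ) : ℝ≥0∞ :=
  ⨆ (k : ℕ) (t : Fin (k + 1) → ℝ)
    (_ : Monotone t ∧ t 0 = a ∧ t (Fin.last k) = b),
      ENNReal.ofReal (∑ i : Fin k, ∑ p : Fin n, ∑ q : Fin n,
        |(M (t i.succ) - M (t i.castSucc)) p q|)

section Aux
open Set Filter
lemma mulVec_norm_le {n : ℕ} (B : Matrix (Fin n) (Fin n) ℝ) (y : Fin n → ℝ) :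
    ‖B.mulVec y‖ ≤ (∑ p, ∑ q, |B p q|) * ‖y‖ := by
  have hK : (0:ℝ) ≤ (∑ p, ∑ q, |B p q|) :=
    Finset.sum_nonneg fun p _ => Finset.sum_nonneg fun q _ => abs_nonneg _
  rw [pi_norm_le_iff_of_nonneg (by positivity)]
  intro p
  calc ‖B.mulVec y p‖ = |∑ q, B p q * y q| := rfl
    _ ≤ ∑ q, |B p q * y q| := Finset.abs_sum_le_sum_abs _ _
    _ ≤ ∑ q, |B p q| * ‖y‖ := by
        refine Finset.sum_le_sum fun q _ => ?_
        rw [abs_mul]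
        exact mul_le_mul_of_nonneg_left (norm_le_pi_norm y q) (abs_nonneg _)
    _ = (∑ q, |B p q|) * ‖y‖ := by rw [Finset.sum_mul]
    _ ≤ (∑ p, ∑ q, |B p q|) * ‖y‖ := by
        refine mul_le_mul_of_nonneg_right ?_ (norm_nonneg _)
        exact Finset.single_le_sum (f := fun p => ∑ q, |B p q|)
          (fun p _ => Finset.sum_nonneg fun q _ => abs_nonneg _) (Finset.mem_univ p)

/-- Transition index in a partition of `[-1, 0]`. -/
lemma exists_transition (k : ℕ) (t : ℕ → ℝ) (ht0 : t 0 = -1) (htk : t k = 0)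
    (hm : ∀ i < k, t i ≤ t (i + 1)) :
    ∃ j < k, t j < 0 ∧ t (j + 1) = 0 ∧
      ∀ i < k, i ≠ j → ((t i < 0 ∧ t (i + 1) < 0) ∨ (t i = 0 ∧ t (i + 1) = 0)) := by
  classical
  have hchain : ∀ {i j : ℕ}, i ≤ j → j ≤ k → t i ≤ t j := by
    intro i j hij hjk
    induction j with
    | zero => simp_all
    | succ m ih =>
      rcases Nat.le_succ_iff.mp hij with h | h
      · exact le_trans (ih h (le_trans (Nat.le_succ m) hjk)) (hm m hjk)
      · exact h ▸ le_rfl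
  have hk0 : 0 < k := by
    rcases Nat.eq_zero_or_pos k with h | h
    · exfalso; rw [h, ht0] at htk; norm_num at htk
    · exact h
  have hle0 : ∀ i ≤ k, t i ≤ 0 := fun i hi => htk ▸ hchain hi le_rfl
  set P : ℕ → Prop := fun i => t i < 0 with hP
  have hP0 : P 0 := by rw [hP]; simp [ht0]
  set j := Nat.findGreatest P (k - 1) with hj
  have hjle : j ≤ k - 1 := Nat.findGreatest_le _
  have hjk : j < k := lt_of_le_of_lt hjle (Nat.sub_lt hk0 one_pos)
  have hPj : P j := Nat.findGreatest_spec (Nat.zero_le _) hP0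
  have hzero : ∀ i, j < i → i ≤ k → t i = 0 := by
    intro i hji hik
    rcases eq_or_lt_of_le hik with h | h
    · rw [h, htk]
    · have : ¬ P i := Nat.findGreatest_is_greatest hji (by omega)
      exact le_antisymm (hle0 i hik) (not_lt.mp this)
  refine ⟨j, hjk, hPj, hzero (j + 1) (Nat.lt_succ_self _) hjk, ?_⟩
  intro i hik hij
  rcases lt_or_gt_of_ne hij with h | h
  · left
    have h1 : t (i + 1) ≤ t j := hchain h (le_of_lt hjk)
    exact ⟨lt_of_le_of_lt (hchain (le_of_lt h) (le_of_lt hjk)) hPj,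
      lt_of_le_of_lt h1 hPj⟩
  · right
    exact ⟨hzero i h (le_of_lt hik), hzero (i + 1) (by omega) hik⟩

lemma half_bound (K e : ℝ) (hK : 0 ≤ K) (he : 0 < e) : K * (e / (2 * (K + 1))) ≤ e / 2 := by
  rw [mul_div_assoc', div_le_div_iff₀ (by positivity) (by norm_num)]
  nlinarith

lemma rs_transfer {n : ℕ} (P Q : ℝ → Matrix (Fin n) (Fin n) ℝ)
    (D E : Matrix (Fin n) (Fin n) ℝ)
    (hQ : ∀ θ ∈ Set.Ico (-1:ℝ) 0, Q θ = D * P θ)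
    (hQ0 : Q 0 = D * P 0 + E)
    (f : ℝ → Fin n → ℝ) (hf : ContinuousWithinAt f (Set.Icc (-1) 0) 0)
    (v : Fin n → ℝ) (hP : IsRSIntegral P f (-1) 0 v) :
    IsRSIntegral Q f (-1) 0 (D.mulVec v + E.mulVec (f 0)) := by
  classical
  intro ε hε
  set KD : ℝ := ∑ p, ∑ q, |D p q| with hKD
  set KE : ℝ := ∑ p, ∑ q, |E p q| with hKE
  have hKD0 : 0 ≤ KD := Finset.sum_nonneg fun p _ => Finset.sum_nonneg fun q _ => abs_nonneg _
  have hKE0 : 0 ≤ KE := Finset.sum_nonneg fun p _ => Finset.sum_nonneg fun q _ => abs_nonneg _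
  set ε₁ : ℝ := ε / (2 * (KD + 1)) with hε₁
  set ε₂ : ℝ := ε / (2 * (KE + 1)) with hε₂
  have hε₁0 : 0 < ε₁ := by positivity
  have hε₂0 : 0 < ε₂ := by positivity
  obtain ⟨δP, hδP0, hδP⟩ := hP ε₁ hε₁0
  obtain ⟨δf, hδf0, hδf⟩ := Metric.continuousWithinAt_iff.mp hf ε₂ hε₂0
  refine ⟨min δP (δf / 2), by positivity, ?_⟩
  intro k t ξ ht0 htk hpart
  have hchain2 : ∀ l ≤ k, t 0 ≤ t l := by
    intro l hl
    induction l with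
    | zero => exact le_rfl
    | succ m ih => exact le_trans (ih (le_trans (Nat.le_succ m) hl)) ((hpart m hl).1)
  obtain ⟨j, hjk, htj, htj1, hother⟩ :=
    exists_transition k t ht0 htk (fun i hi => (hpart i hi).1)
  -- the sum identity
  have key : ∀ i ∈ Finset.range k,
      (Q (t (i + 1)) - Q (t i)).mulVec (f (ξ i))
        = D.mulVec ((P (t (i + 1)) - P (t i)).mulVec (f (ξ i)))
          + (if i = j then E.mulVec (f (ξ j)) else 0) := by
    intro i hi
    rw [Finset.mem_range] at hi
    have hmem : ∀ l ≤ k, t l < 0 → t l ∈ Set.Ico (-1:ℝ) 0 := by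
      intro l hl hneg
      exact ⟨by linarith [hchain2 l hl, ht0.le, ht0.ge], hneg⟩
    by_cases hij : i = j
    · subst hij
      rw [if_pos rfl, htj1, hQ0, hQ (t i) (hmem i (le_of_lt hi) htj)]
      rw [show D * P 0 + E - D * P (t i) = D * (P 0 - P (t i)) + E by
        rw [Matrix.mul_sub]; abel]
      rw [Matrix.add_mulVec, ← Matrix.mulVec_mulVec]
    · rw [if_neg hij, add_zero]
      rcases hother i hi hij with ⟨h1, h2⟩ | ⟨h1, h2⟩
      · rw [hQ _ (hmem (i+1) hi h2), hQ _ (hmem i (le_of_lt hi) h1), ← Matrix.mul_sub,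
          ← Matrix.mulVec_mulVec]
      · simp [h1, h2]
  rw [Finset.sum_congr rfl key, Finset.sum_add_distrib, Finset.sum_ite_eq' (Finset.range k) j
    (fun _ => E.mulVec (f (ξ j))), if_pos (Finset.mem_range.mpr hjk)]
  -- estimate
  have hsum : (∑ i ∈ Finset.range k, D.mulVec ((P (t (i + 1)) - P (t i)).mulVec (f (ξ i))))
      = D.mulVec (∑ i ∈ Finset.range k, (P (t (i + 1)) - P (t i)).mulVec (f (ξ i))) := by
    simp only [← Matrix.mulVecLin_apply, ← map_sum]
  rw [hsum]
  have hPdist : dist (∑ i ∈ Finset.range k, (P (t (i + 1)) - P (t i)).mulVec (f (ξ i))) v ≤ ε₁ := by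
    refine hδP k t ξ ht0 htk fun i hi => ⟨(hpart i hi).1, ?_, (hpart i hi).2.2⟩
    exact le_trans (hpart i hi).2.1 (min_le_left _ _)
  have hξj : dist (f (ξ j)) (f 0) ≤ ε₂ := by
    have hξ := (hpart j hjk).2.2
    rw [htj1] at hξ
    have hδ := (hpart j hjk).2.1
    rw [htj1] at hδ
    have h1 : -(δf/2) ≤ ξ j := by
      have : - (min δP (δf/2)) ≤ t j := by linarith
      have h2 := min_le_right δP (δf/2)
      linarith [hξ.1]
    have hmemj : ξ j ∈ Set.Icc (-1:ℝ) 0 := by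
      refine ⟨?_, hξ.2⟩
      have := hchain2 j (le_of_lt hjk)
      linarith [hξ.1, ht0.le, ht0.ge]
    refine le_of_lt (hδf hmemj ?_)
    rw [Real.dist_eq, sub_zero, abs_of_nonpos hξ.2]
    linarith
  calc dist (D.mulVec (∑ i ∈ Finset.range k, (P (t (i + 1)) - P (t i)).mulVec (f (ξ i)))
          + E.mulVec (f (ξ j))) (D.mulVec v + E.mulVec (f 0))
      = ‖D.mulVec ((∑ i ∈ Finset.range k, (P (t (i + 1)) - P (t i)).mulVec (f (ξ i))) - v)
          + E.mulVec (f (ξ j) - f 0)‖ := by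
        rw [dist_eq_norm, Matrix.mulVec_sub, Matrix.mulVec_sub, add_sub_add_comm]
    _ ≤ ‖D.mulVec ((∑ i ∈ Finset.range k, (P (t (i + 1)) - P (t i)).mulVec (f (ξ i))) - v)‖
          + ‖E.mulVec (f (ξ j) - f 0)‖ := norm_add_le _ _
    _ ≤ KD * ε₁ + KE * ε₂ := by
        refine add_le_add (le_trans (mulVec_norm_le _ _) ?_) (le_trans (mulVec_norm_le _ _) ?_)
        · exact mul_le_mul_of_nonneg_left (by rw [← dist_eq_norm]; exact hPdist) hKD0
        · exact mul_le_mul_of_nonneg_left (by rw [← dist_eq_norm]; exact hξj) hKE0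
    _ ≤ ε / 2 + ε / 2 := by
        exact add_le_add (half_bound KD ε hKD0 hε) (half_bound KE ε hKE0 hε)
    _ = ε := add_halves ε


/-- Key partition-modification estimate. -/
lemma sum_trick (g : ℝ → ℝ) (a s : ℝ) (has : a ≤ s) (hs0 : s < 0)
    (m : ℕ) (u : ℕ → ℝ) (hu : Monotone u) (hus : ∀ i, u i ∈ Set.Icc a 0)
    (hbig : ∀ i ≤ m, u i < 0 → u i ≤ s) :
    ∑ i ∈ Finset.range m, edist (g (u (i + 1))) (g (u i))
      ≤ eVariationOn g (Set.Icc a s) + edist (g 0) (g s) := by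
  classical
  set u' : ℕ → ℝ := fun i => min (u i) s with hu'def
  have hu' : Monotone u' := fun i j hij => min_le_min (hu hij) le_rfl
  have hus' : ∀ i, u' i ∈ Set.Icc a s := fun i => ⟨le_min (hus i).1 has, min_le_right _ _⟩
  have step : ∀ i ∈ Finset.range m,
      edist (g (u (i + 1))) (g (u i)) ≤ edist (g (u' (i + 1))) (g (u' i))
        + (if u i < 0 ∧ 0 ≤ u (i + 1) then edist (g 0) (g s) else 0) := by
    intro i hi
    rw [Finset.mem_range] at hi
    by_cases h1 : u (i + 1) < 0
    · have h2 : u i < 0 := lt_of_le_of_lt (hu (Nat.le_succ i)) h1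
      have e1 : u' (i + 1) = u (i + 1) := min_eq_left (hbig (i + 1) hi h1)
      have e2 : u' i = u i := min_eq_left (hbig i (le_of_lt hi) h2)
      rw [e1, e2, if_neg (by push_neg; intro _; exact h1)]
      simp
    · push_neg at h1
      by_cases h2 : u i < 0
      · have e2 : u' i = u i := min_eq_left (hbig i (le_of_lt hi) h2)
        have e0 : u (i + 1) = 0 := le_antisymm (hus _).2 h1
        have e1 : u' (i + 1) = s := by rw [hu'def]; simp [e0, min_eq_right hs0.le]
        rw [if_pos (show u i < 0 ∧ 0 ≤ u (i+1) from ⟨h2, h1⟩), e1, e2, e0]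
        calc edist (g 0) (g (u i)) ≤ edist (g 0) (g s) + edist (g s) (g (u i)) :=
              edist_triangle _ _ _
          _ = edist (g s) (g (u i)) + edist (g 0) (g s) := add_comm _ _
      · push_neg at h2
        have e0 : u i = 0 := le_antisymm (hus _).2 h2
        have e1 : u (i + 1) = 0 := le_antisymm (hus _).2 (le_trans h2 (hu (Nat.le_succ i)))
        rw [e0, e1]
        simp
  calc ∑ i ∈ Finset.range m, edist (g (u (i + 1))) (g (u i))
      ≤ ∑ i ∈ Finset.range m, (edist (g (u' (i + 1))) (g (u' i))
        + (if u i < 0 ∧ 0 ≤ u (i + 1) then edist (g 0) (g s) else 0)) :=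
        Finset.sum_le_sum step
    _ = (∑ i ∈ Finset.range m, edist (g (u' (i + 1))) (g (u' i)))
        + ∑ i ∈ Finset.range m, (if u i < 0 ∧ 0 ≤ u (i + 1) then edist (g 0) (g s) else 0) :=
        Finset.sum_add_distrib
    _ ≤ eVariationOn g (Set.Icc a s) + edist (g 0) (g s) := by
        refine add_le_add (eVariationOn.sum_le (f := g) (n := m) hu' hus') ?_
        rw [← Finset.sum_filter]
        have hcard : ((Finset.range m).filter fun i => u i < 0 ∧ 0 ≤ u (i + 1)).card ≤ 1 := by
          rw [Finset.card_le_one]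
          intro p hp q hq
          rw [Finset.mem_filter] at hp hq
          by_contra hne
          rcases lt_or_gt_of_ne hne with h | h
          · exact absurd (le_trans hp.2.2 (hu h)) (not_le.mpr hq.2.1)
          · exact absurd (le_trans hq.2.2 (hu h)) (not_le.mpr hp.2.1)
        rw [Finset.sum_const]
        calc (((Finset.range m).filter fun i => u i < 0 ∧ 0 ≤ u (i + 1)).card : ℕ)
              • edist (g 0) (g s)
            = (((Finset.range m).filter fun i => u i < 0 ∧ 0 ≤ u (i + 1)).card : ℝ≥0∞)
              * edist (g 0) (g s) := by rw [nsmul_eq_mul]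
          _ ≤ 1 * edist (g 0) (g s) := by
              refine mul_le_mul_left ?_ _
              exact_mod_cast hcard
          _ = edist (g 0) (g s) := one_mul _

/-- Variation on `Icc a 0` in terms of variation on `Ico a 0` plus a bound on the jump. -/
lemma evar_Icc_le (g : ℝ → ℝ) (a : ℝ) (ha : a < 0) (B : ℝ≥0∞)
    (hB : ∀ θ ∈ Set.Ico a (0:ℝ), edist (g 0) (g θ) ≤ B) :
    eVariationOn g (Set.Icc a 0) ≤ eVariationOn g (Set.Ico a 0) + B := by
  classical
  rw [eVariationOn]
  refine iSup_le ?_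
  rintro ⟨m, u, hu, hus⟩
  dsimp only
  set s : ℝ := (Finset.range (m + 1)).sup' ⟨0, by simp⟩ (fun i => if u i < 0 then u i else a)
    with hsdef
  have hs0 : s < 0 := by
    rw [hsdef]; apply (Finset.sup'_lt_iff ..).mpr
    intro i _
    split
    · assumption
    · exact ha
  have has : a ≤ s := by
    refine le_trans ?_ (Finset.le_sup' (f := fun i => if u i < 0 then u i else a)
      (Finset.self_mem_range_succ m))
    split
    · exact (hus m).1
    · exact le_rfl
  have hbig : ∀ i ≤ m, u i < 0 → u i ≤ s := by
    intro i hi hneg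
    have := Finset.le_sup' (f := fun i => if u i < 0 then u i else a)
      (Finset.mem_range_succ_iff.mpr hi)
    rwa [if_pos hneg] at this
  calc ∑ i ∈ Finset.range m, edist (g (u (i + 1))) (g (u i))
      ≤ eVariationOn g (Set.Icc a s) + edist (g 0) (g s) :=
        sum_trick g a s has hs0 m u hu hus hbig
    _ ≤ eVariationOn g (Set.Ico a 0) + B := by
        refine add_le_add (eVariationOn.mono g ?_) (hB s ⟨has, hs0⟩)
        exact fun y hy => ⟨hy.1, lt_of_le_of_lt hy.2 hs0⟩

lemma bv_of_const : ∀ (c : ℝ) (s : Set ℝ), BoundedVariationOn (fun _ => c) s := by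
  intro c s
  have : eVariationOn (fun _ => c) s = 0 :=
    eVariationOn.constant_on (by
      rintro x ⟨y, _, rfl⟩ z ⟨w, _, rfl⟩; rfl)
  simp [BoundedVariationOn, this]

lemma evar_add_le (f g : ℝ → ℝ) (s : Set ℝ) :
    eVariationOn (fun x => f x + g x) s ≤ eVariationOn f s + eVariationOn g s := by
  rw [eVariationOn]
  refine iSup_le ?_
  rintro ⟨m, u, hu, hus⟩
  dsimp only
  calc ∑ i ∈ Finset.range m, edist (f (u (i + 1)) + g (u (i + 1))) (f (u i) + g (u i))
      ≤ ∑ i ∈ Finset.range m,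
          (edist (f (u (i + 1))) (f (u i)) + edist (g (u (i + 1))) (g (u i))) :=
        Finset.sum_le_sum fun i _ => edist_add_add_le _ _ _ _
    _ = (∑ i ∈ Finset.range m, edist (f (u (i + 1))) (f (u i)))
        + ∑ i ∈ Finset.range m, edist (g (u (i + 1))) (g (u i)) := Finset.sum_add_distrib
    _ ≤ _ := add_le_add (eVariationOn.sum_le (f := f) (n := m) hu hus) (eVariationOn.sum_le (f := g) (n := m) hu hus)

lemma bv_add {f g : ℝ → ℝ} {s : Set ℝ} (hf : BoundedVariationOn f s)
    (hg : BoundedVariationOn g s) : BoundedVariationOn (fun x => f x + g x) s := by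
  exact ne_top_of_le_ne_top (ENNReal.add_ne_top.mpr ⟨hf, hg⟩) (evar_add_le f g s)

lemma bv_const_mul (c : ℝ) {f : ℝ → ℝ} {s : Set ℝ} (hf : BoundedVariationOn f s) :
    BoundedVariationOn (fun x => c * f x) s := by
  have hle : eVariationOn (fun x => c * f x) s ≤ ENNReal.ofReal |c| * eVariationOn f s := by
    rw [eVariationOn]
    refine iSup_le ?_
    rintro ⟨m, u, hu, hus⟩
    dsimp only
    calc ∑ i ∈ Finset.range m, edist (c * f (u (i + 1))) (c * f (u i))
        = ∑ i ∈ Finset.range m, ENNReal.ofReal |c| * edist (f (u (i + 1))) (f (u i)) := by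
          refine Finset.sum_congr rfl fun i _ => ?_
          rw [edist_dist, edist_dist, Real.dist_eq, Real.dist_eq, ← mul_sub, abs_mul,
            ENNReal.ofReal_mul (abs_nonneg c)]
      _ = ENNReal.ofReal |c| * ∑ i ∈ Finset.range m, edist (f (u (i + 1))) (f (u i)) :=
          (Finset.mul_sum _ _ _).symm
      _ ≤ ENNReal.ofReal |c| * eVariationOn f s :=
          mul_le_mul_right (eVariationOn.sum_le (f := f) (n := m) hu hus) _
  exact ne_top_of_le_ne_top (ENNReal.mul_ne_top ENNReal.ofReal_ne_top hf) hle

lemma bv_finsum {ι : Type*} (T : Finset ι) (F : ι → ℝ → ℝ) (s : Set ℝ)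
    (h : ∀ i ∈ T, BoundedVariationOn (F i) s) :
    BoundedVariationOn (fun x => ∑ i ∈ T, F i x) s := by
  classical
  induction T using Finset.induction with
  | empty => simpa using bv_of_const 0 s
  | insert _ _ hni ih =>
    rename_i b T'
    simp only [Finset.sum_insert hni]
    exact bv_add (h b (Finset.mem_insert_self _ _))
      (ih fun i hi => h i (Finset.mem_insert_of_mem hi))

/-- Main analytic lemma: variation on `[s,0]` of a BV function left-continuous at `0`
tends to `0` as `s → 0⁻`. -/
lemma tendsto_evar_zero (g : ℝ → ℝ) (hfin : eVariationOn g (Set.Icc (-1) 0) ≠ ⊤)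
    (hg : Filter.Tendsto g (nhdsWithin 0 (Set.Iio 0)) (nhds (g 0))) :
    Filter.Tendsto (fun s => eVariationOn g (Set.Icc s 0)) (nhdsWithin 0 (Set.Iio 0)) (nhds 0) := by
  rw [ENNReal.tendsto_nhds_zero]
  intro ε hε
  set V := eVariationOn g (Set.Icc (-1) 0) with hV
  by_cases hVε : V ≤ ε
  · filter_upwards [Ioo_mem_nhdsLT (by norm_num : (-1:ℝ) < 0)] with s hs
    exact le_trans (le_trans (eVariationOn.mono g
      (Set.Icc_subset_Icc_left hs.1.le)) le_rfl) hVε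
  · push_neg at hVε
    have hV0 : V ≠ 0 := fun h => by rw [h] at hVε; exact absurd (zero_le : (0:ℝ≥0∞) ≤ ε) (not_le.mpr hVε)
    have hε2 : (0:ℝ≥0∞) < ε / 2 := ENNReal.half_pos (ne_of_gt hε)
    have hsub : V - ε / 2 < V := ENNReal.sub_lt_self hfin hV0 (ne_of_gt hε2)
    rw [hV, eVariationOn, lt_iSup_iff] at hsub
    obtain ⟨⟨m, u, hu, hus⟩, hS⟩ := hsub
    dsimp only at hS
    set s₀ : ℝ := (Finset.range (m + 1)).sup' ⟨0, by simp⟩ (fun i => if u i < 0 then u i else -1)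
      with hs₀def
    have hs₀0 : s₀ < 0 := by
      rw [hs₀def]; apply (Finset.sup'_lt_iff ..).mpr
      intro i _
      split
      · assumption
      · norm_num
    have hs₀a : (-1:ℝ) ≤ s₀ := by
      refine le_trans ?_ (Finset.le_sup' (f := fun i => if u i < 0 then u i else -1)
        (Finset.self_mem_range_succ m))
      split
      · exact (hus m).1
      · exact le_rfl
    have hev : ∀ᶠ s in nhdsWithin (0:ℝ) (Set.Iio 0), edist (g s) (g 0) < ε / 2 :=
      (EMetric.tendsto_nhds.mp hg) (ε / 2) hε2
    filter_upwards [hev, Ioo_mem_nhdsLT hs₀0] with s hdist hsIoo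
    have hs0 : s < 0 := hsIoo.2
    have has : (-1:ℝ) ≤ s := le_trans hs₀a hsIoo.1.le
    have hbig : ∀ i ≤ m, u i < 0 → u i ≤ s := by
      intro i hi hneg
      have := Finset.le_sup' (f := fun i => if u i < 0 then u i else -1)
        (Finset.mem_range_succ_iff.mpr hi)
      rw [if_pos hneg] at this
      exact le_trans this hsIoo.1.le
    have hkey : V - ε / 2 < eVariationOn g (Set.Icc (-1) s) + ε / 2 := by
      refine lt_of_lt_of_le hS (le_trans
        (sum_trick g (-1) s has hs0 m u hu hus hbig) ?_)
      exact add_le_add le_rfl (le_of_lt (by rwa [edist_comm] at hdist))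
    have hVle : V ≤ eVariationOn g (Set.Icc (-1) s) + ε := by
      have h1 : V ≤ (V - ε / 2) + ε / 2 := le_tsub_add
      calc V ≤ (V - ε / 2) + ε / 2 := h1
        _ ≤ (eVariationOn g (Set.Icc (-1) s) + ε / 2) + ε / 2 :=
          add_le_add (le_of_lt hkey) le_rfl
        _ = eVariationOn g (Set.Icc (-1) s) + ε := by
          rw [add_assoc, ENNReal.add_halves]
    have hadd : eVariationOn g (Set.Icc (-1) s) + eVariationOn g (Set.Icc s 0) = V := by
      have := eVariationOn.Icc_add_Icc g (s := (Set.univ : Set ℝ)) has hs0.le (Set.mem_univ s)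
      simpa [Set.univ_inter] using this
    have hfin' : eVariationOn g (Set.Icc (-1) s) ≠ ⊤ := by
      refine ne_top_of_le_ne_top hfin ?_
      rw [← hadd] at *
      exact le_self_add
    refine ENNReal.le_of_add_le_add_left hfin' ?_
    rw [hadd]
    exact hVle


lemma matvar_le {n : ℕ} (N : ℝ → Matrix (Fin n) (Fin n) ℝ) (s : ℝ) :
    MatVarOn N s 0 ≤ ∑ p : Fin n, ∑ q : Fin n,
      eVariationOn (fun θ => N θ p q) (Set.Icc s 0) := by
  rw [MatVarOn]
  refine iSup_le fun k => iSup_le fun t => iSup_le ?_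
  rintro ⟨hmono, ht0, htl⟩
  have hmem : ∀ i : Fin (k + 1), t i ∈ Set.Icc s 0 :=
    fun i => ⟨ht0 ▸ hmono (Fin.zero_le i), htl ▸ hmono (Fin.le_last i)⟩
  have hre : ENNReal.ofReal (∑ i : Fin k, ∑ p : Fin n, ∑ q : Fin n,
      |(N (t i.succ) - N (t i.castSucc)) p q|)
      = ∑ p : Fin n, ∑ q : Fin n, ∑ i : Fin k,
        edist (N (t i.succ) p q) (N (t i.castSucc) p q) := by
    rw [show (∑ i : Fin k, ∑ p : Fin n, ∑ q : Fin n,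
        |(N (t i.succ) - N (t i.castSucc)) p q|)
        = ∑ p : Fin n, ∑ q : Fin n, ∑ i : Fin k,
          |N (t i.succ) p q - N (t i.castSucc) p q| by
      rw [Finset.sum_comm]
      refine Finset.sum_congr rfl fun p _ => Finset.sum_comm.trans ?_
      refine Finset.sum_congr rfl fun q _ => Finset.sum_congr rfl fun i _ => ?_
      rw [Matrix.sub_apply]]
    rw [ENNReal.ofReal_sum_of_nonneg fun p _ =>
      Finset.sum_nonneg fun q _ => Finset.sum_nonneg fun i _ => abs_nonneg _]
    refine Finset.sum_congr rfl fun p _ => ?_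
    rw [ENNReal.ofReal_sum_of_nonneg fun q _ => Finset.sum_nonneg fun i _ => abs_nonneg _]
    refine Finset.sum_congr rfl fun q _ => ?_
    rw [ENNReal.ofReal_sum_of_nonneg fun i _ => abs_nonneg _]
    refine Finset.sum_congr rfl fun i _ => ?_
    rw [edist_dist, Real.dist_eq]
  rw [hre]
  refine Finset.sum_le_sum fun p _ => Finset.sum_le_sum fun q _ => ?_
  set u : ℕ → ℝ := fun j => t ⟨min j k, Nat.lt_succ_of_le (min_le_right j k)⟩ with hudef
  have hu : Monotone u := fun i j hij => hmono (by
    simp only [Fin.mk_le_mk]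
    exact min_le_min hij le_rfl)
  have hus : ∀ j, u j ∈ Set.Icc s 0 := fun j => hmem _
  have hsum : ∑ i : Fin k, edist (N (t i.succ) p q) (N (t i.castSucc) p q)
      = ∑ j ∈ Finset.range k, edist ((fun θ => N θ p q) (u (j + 1)))
          ((fun θ => N θ p q) (u j)) := by
    rw [← Fin.sum_univ_eq_sum_range]
    refine Finset.sum_congr rfl fun i _ => ?_
    have h1 : u (i : ℕ) = t i.castSucc :=
      congrArg t (Fin.ext (min_eq_left (le_of_lt i.is_lt)))
    have h2 : u ((i : ℕ) + 1) = t i.succ :=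
      congrArg t (Fin.ext (min_eq_left i.is_lt))
    rw [h1, h2]
  rw [hsum]
  exact eVariationOn.sum_le (n := k) hu hus

end Aux

section Main
open Set Filter

/-- with `A = M(0) − M(0⁻)`, `det(I − A) ≠ 0`, and
`N(θ) = (I−A)⁻¹ M(θ)` for `θ ∈ [-1,0)`, `N(0) = (I−A)⁻¹ M(0⁻)`, a continuous
`x : [-1,δ) → ℝ^n` solves `x(t) = ∫_{-1}^0 dM(θ) x(t+θ)` on `[0,δ)` iff it solves
`x(t) = ∫_{-1}^0 dN(θ) x(t+θ)`; moreover `Var N` on `[s,0]` tends to `0` as `s → 0⁻`. -/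
theorem stmt2 {n : ℕ} (M : ℝ → Matrix (Fin n) (Fin n) ℝ)
    (hBV : ∀ i j, BoundedVariationOn (fun s => M s i j) (Set.Icc (-1) 0))
    (Mleft : Matrix (Fin n) (Fin n) ℝ)
    (hlim : ∀ i j, Filter.Tendsto (fun s => M s i j) (nhdsWithin 0 (Set.Iio 0))
      (nhds (Mleft i j)))
    (hdet : (1 - (M 0 - Mleft)).det ≠ 0)
    (N : ℝ → Matrix (Fin n) (Fin n) ℝ)
    (hN : ∀ θ ∈ Set.Ico (-1:ℝ) 0, N θ = (1 - (M 0 - Mleft))⁻¹ * M θ)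
    (hN0 : N 0 = (1 - (M 0 - Mleft))⁻¹ * Mleft) :
    (∀ (δ : ℝ) (x : ℝ → Fin n → ℝ), 0 < δ →
      ContinuousOn x (Set.Ico (-1) δ) →
      ((∀ t, 0 ≤ t → t < δ → IsRSIntegral M (fun θ => x (t + θ)) (-1) 0 (x t)) ↔
        (∀ t, 0 ≤ t → t < δ → IsRSIntegral N (fun θ => x (t + θ)) (-1) 0 (x t)))) ∧
    Filter.Tendsto (fun s => MatVarOn N s 0) (nhdsWithin 0 (Set.Iio 0)) (nhds 0) := by
  classical
  set A := M 0 - Mleft with hA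
  set C := (1 - A)⁻¹ with hC
  have hunit : IsUnit (1 - A).det := isUnit_iff_ne_zero.mpr hdet
  have hC1 : C * (1 - A) = 1 := Matrix.nonsing_inv_mul _ hunit
  have h1C : (1 - A) * C = 1 := Matrix.mul_nonsing_inv _ hunit
  constructor
  · intro δ x hδ hx
    have hf : ∀ t, 0 ≤ t → t < δ →
        ContinuousWithinAt (fun θ => x (t + θ)) (Set.Icc (-1) 0) 0 := by
      intro t ht htδ
      have hx' : ContinuousWithinAt x (Set.Ico (-1) δ) (t + 0) := by
        rw [add_zero]
        exact hx t ⟨by linarith, htδ⟩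
      have hmaps : Set.MapsTo (fun θ => t + θ) (Set.Icc (-1) 0) (Set.Ico (-1) δ) :=
        fun θ hθ => ⟨show (-1:ℝ) ≤ t + θ by linarith [hθ.1], show t + θ < δ by linarith [hθ.2]⟩
      exact hx'.comp ((continuous_const.add continuous_id).continuousWithinAt) hmaps
    constructor
    · intro hM t ht htδ
      have hQ0 : N 0 = C * M 0 + -(C * A) := by
        rw [hN0, hA, Matrix.mul_sub]
        abel
      have h := rs_transfer M N C (-(C * A)) (fun θ hθ => hN θ hθ) hQ0
        (fun θ => x (t + θ)) (hf t ht htδ) (x t) (hM t ht htδ)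
      have hval : C.mulVec (x t) + (-(C * A)).mulVec ((fun θ => x (t + θ)) 0) = x t := by
        simp only [add_zero]
        rw [Matrix.neg_mulVec, ← sub_eq_add_neg, ← Matrix.sub_mulVec,
          show C - C * A = C * (1 - A) by rw [Matrix.mul_sub C 1 A, Matrix.mul_one],
          hC1, Matrix.one_mulVec]
      rwa [hval] at h
    · intro hNsol t ht htδ
      have hQ : ∀ θ ∈ Set.Ico (-1:ℝ) 0, M θ = (1 - A) * N θ := by
        intro θ hθ
        rw [hN θ hθ, ← Matrix.mul_assoc, h1C, Matrix.one_mul]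
      have hQ0 : M 0 = (1 - A) * N 0 + A := by
        rw [hN0, ← Matrix.mul_assoc, h1C, Matrix.one_mul, hA]
        abel
      have h := rs_transfer N M (1 - A) A hQ hQ0
        (fun θ => x (t + θ)) (hf t ht htδ) (x t) (hNsol t ht htδ)
      have hval : (1 - A).mulVec (x t) + A.mulVec ((fun θ => x (t + θ)) 0) = x t := by
        simp only [add_zero]
        rw [← Matrix.add_mulVec, sub_add_cancel, Matrix.one_mulVec]
      rwa [hval] at h
  · have hentry : ∀ p q : Fin n, Filter.Tendsto
        (fun s => eVariationOn (fun θ => N θ p q) (Set.Icc s 0))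
        (nhdsWithin 0 (Set.Iio 0)) (nhds 0) := by
      intro p q
      set g : ℝ → ℝ := fun θ => N θ p q with hg
      have hgl : Filter.Tendsto g (nhdsWithin 0 (Set.Iio 0)) (nhds (g 0)) := by
        have h1 : Filter.Tendsto (fun θ => ∑ r, C p r * M θ r q)
            (nhdsWithin 0 (Set.Iio 0)) (nhds (∑ r, C p r * Mleft r q)) :=
          tendsto_finset_sum _ fun r _ => ((hlim r q).const_mul (C p r))
        have heq : ∀ᶠ θ in nhdsWithin (0:ℝ) (Set.Iio 0),
            (fun θ => ∑ r, C p r * M θ r q) θ = g θ := by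
          filter_upwards [Ioo_mem_nhdsLT (by norm_num : (-1:ℝ) < 0)] with θ hθ
          rw [hg]
          simp only
          rw [hN θ ⟨hθ.1.le, hθ.2⟩, Matrix.mul_apply]
        have hg0 : g 0 = ∑ r, C p r * Mleft r q := by
          rw [hg]
          simp only
          rw [hN0, Matrix.mul_apply]
        rw [hg0]
        exact Filter.Tendsto.congr' heq h1
      have hbvIco : BoundedVariationOn g (Set.Ico (-1) 0) := by
        have hbv2 : BoundedVariationOn (fun θ => ∑ r, C p r * M θ r q)
            (Set.Ico (-1) 0) :=
          bv_finsum Finset.univ _ _ fun r _ =>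
            bv_const_mul _ ((hBV r q).mono Set.Ico_subset_Icc_self)
        have e : eVariationOn g (Set.Ico (-1) 0)
            = eVariationOn (fun θ => ∑ r, C p r * M θ r q) (Set.Ico (-1) 0) := by
          refine eVariationOn.eq_of_eqOn fun θ hθ => ?_
          rw [hg]
          simp only
          rw [hN θ hθ, Matrix.mul_apply]
        unfold BoundedVariationOn
        rw [e]
        exact hbv2
      have hfin : eVariationOn g (Set.Icc (-1) 0) ≠ ⊤ := by
        have hB : ∀ θ ∈ Set.Ico (-1:ℝ) 0, edist (g 0) (g θ)
            ≤ edist (g 0) (g (-1)) + eVariationOn g (Set.Ico (-1) 0) := by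
          intro θ hθ
          calc edist (g 0) (g θ)
              ≤ edist (g 0) (g (-1)) + edist (g (-1)) (g θ) := edist_triangle _ _ _
            _ ≤ _ := add_le_add le_rfl (eVariationOn.edist_le g
                (show (-1:ℝ) ∈ Set.Ico (-1:ℝ) 0 from ⟨le_rfl, by norm_num⟩) hθ)
        refine ne_top_of_le_ne_top ?_ (evar_Icc_le g (-1) (by norm_num) _ hB)
        exact ENNReal.add_ne_top.mpr ⟨hbvIco,
          ENNReal.add_ne_top.mpr ⟨edist_ne_top _ _, hbvIco⟩⟩
      exact tendsto_evar_zero g hfin hgl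
    have hupper : Filter.Tendsto
        (fun s => ∑ p : Fin n, ∑ q : Fin n, eVariationOn (fun θ => N θ p q) (Set.Icc s 0))
        (nhdsWithin 0 (Set.Iio 0)) (nhds 0) := by
      have := tendsto_finset_sum (Finset.univ (α := Fin n))
        (f := fun p (s : ℝ) => ∑ q : Fin n, eVariationOn (fun θ => N θ p q) (Set.Icc s 0))
        (fun p _ => tendsto_finset_sum (Finset.univ (α := Fin n)) fun q _ => hentry p q)
      simpa using this
    exact tendsto_of_tendsto_of_tendsto_of_le_of_le tendsto_const_nhds hupper
      (fun s => zero_le) (fun s => matvar_le N s)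

end Main
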